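/- Let Γ be a weighted congestion game fulfilling Conditions 1–2 with Σ_u = Σ_{u'} for all players u, u', let Γ̂ be its Ψ̂-game, and let ε ∈ (0,1). Suppose the profile S^(t) is not a 1/(1−ε)-approximate pure Nash equilibrium of Γ̂ and S^(t+1) is obtained from S^(t) by an Algorithm 1 step with chosen player u_t. Then for every player u ∈ 𝒩, ĉ_{u_t}(S^(t)) − ĉ_{u_t}(S^(t+1)) ≥ (ε/(W + d!·W^{d+1}))·ĉ_u(S^(t)); consequently Φ̂(S^(t)) − Φ̂(S^(t+1)) ≥ (ε/(N·(W + d!·W^{d+1})))·Φ̂(S^(t)). -/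

import Mathlib

/-- `hpoly k l` is the complete homogeneous symmetric polynomial of degree `k`
evaluated at the entries of the list `l`, i.e. the sum of all monomials of
total degree `k` in the elements of `l`. -/
noncomputable def hpoly : ℕ → List ℝ → ℝ
  | 0, _ => 1
  | _ + 1, [] => 0
  | k + 1, a :: l => a * hpoly k (a :: l) + hpoly (k + 1) l
termination_by k l => (k, l.length)

/-- The `k`-order `Ψ̂`-function of a multiset `M` of reals:
`Ψ̂_k(M) = k! ·` (sum of all monomials of total degree `k` in the elements of `M`).
In particular `Ψ̂_0(M) = 1` and `Ψ̂_k(∅) = 0` for `k ≥ 1`. -/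
noncomputable def psiHat (k : ℕ) (M : Multiset ℝ) : ℝ :=
  (Nat.factorial k : ℝ) * hpoly k M.toList

/-- A weighted congestion game with `N` players, `E` resources, polynomial latency
functions of degree at most `d` (Condition 2, with coefficient-ratio bound `A`),
and players' weights in `[1, W]` (Condition 1). -/
structure WCGame (N E d : ℕ) (W A : ℝ) where
  /-- the strategy set of each player: a set of nonempty subsets of resources -/
  strat : Fin N → Set (Finset (Fin E))
  strat_nonempty : ∀ u, (strat u).Nonempty
  strat_valid : ∀ u, ∀ s ∈ strat u, s.Nonempty
  /-- the weight of each player -/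
  w : Fin N → ℝ
  /-- `a e k` is the coefficient of `x^k` in the latency function of resource `e` -/
  a : Fin E → ℕ → ℝ
  hd : 1 ≤ d
  hW : 1 ≤ W
  hw_lower : ∀ u, 1 ≤ w u
  hw_upper : ∀ u, w u ≤ W
  ha_nonneg : ∀ e k, 0 ≤ a e k
  ha_pos : ∀ e, 0 < ∑ k ∈ Finset.range (d + 1), a e k
  hA_pos : 0 < A
  hA_bound : ∀ e e' k k', k ≤ d → k' ≤ d → 0 < a e k → a e' k' ≤ A * a e k

namespace WCGame

/-- A (pure strategy) profile: a choice of a set of resources for every player. -/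
abbrev Profile (N E : ℕ) := Fin N → Finset (Fin E)

variable {N E d : ℕ} {W A : ℝ}

/-- A profile is feasible if every player uses one of her strategies. -/
def IsProfile (G : WCGame N E d W A) (S : Profile N E) : Prop :=
  ∀ u, S u ∈ G.strat u

/-- `U_e(S)`: the multiset of weights of the players using resource `e` in profile `S`. -/
noncomputable def load (G : WCGame N E d W A) (S : Profile N E) (e : Fin E) : Multiset ℝ :=
  (Finset.univ.filter (fun u => e ∈ S u)).val.map G.w

/-- The cost `c_u(S) = w_u · ∑_{e ∈ s_u} ∑_{k=0}^d a_{e,k} · L(U_e(S))^k` of player `u`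
in the original game `Γ`. -/
noncomputable def cost (G : WCGame N E d W A) (S : Profile N E) (u : Fin N) : ℝ :=
  G.w u * ∑ e ∈ S u, ∑ k ∈ Finset.range (d + 1), G.a e k * (G.load S e).sum ^ k

/-- The cost `ĉ_u(S) = w_u · ∑_{e ∈ s_u} ∑_{k=0}^d a_{e,k} · Ψ̂_k(U_e(S))` of player `u`
in the `Ψ̂`-game `Γ̂`. -/
noncomputable def hcost (G : WCGame N E d W A) (S : Profile N E) (u : Fin N) : ℝ :=
  G.w u * ∑ e ∈ S u, ∑ k ∈ Finset.range (d + 1), G.a e k * psiHat k (G.load S e)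

/-- The potential function `Φ̂(S) = ∑_e ∑_{k=0}^d (a_{e,k}/(k+1)) · Ψ̂_{k+1}(U_e(S))`
of the `Ψ̂`-game. -/
noncomputable def potHat (G : WCGame N E d W A) (S : Profile N E) : ℝ :=
  ∑ e : Fin E, ∑ k ∈ Finset.range (d + 1),
    G.a e k / ((k : ℝ) + 1) * psiHat (k + 1) (G.load S e)

/-- The approximate potential function `Φ(S) = ∑_e Ψ_e(L(U_e(S)))` with
`Ψ_e(x) = a_{e,0}·x + ∑_{k=1}^d a_{e,k}·(x^{k+1}/(k+1) + x^k/2)`. -/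
noncomputable def pot (G : WCGame N E d W A) (S : Profile N E) : ℝ :=
  ∑ e : Fin E,
    (G.a e 0 * (G.load S e).sum +
      ∑ k ∈ Finset.Icc 1 d,
        G.a e k * ((G.load S e).sum ^ (k + 1) / ((k : ℝ) + 1) + (G.load S e).sum ^ k / 2))

/-- `S` is a `ρ`-approximate pure Nash equilibrium w.r.t. the player costs `costFn`:
no player can decrease her cost by more than a factor `ρ` by a unilateral deviation. -/
def IsApproxPNE (G : WCGame N E d W A) (costFn : Profile N E → Fin N → ℝ) (ρ : ℝ)
    (S : Profile N E) : Prop :=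
  ∀ u, ∀ s' ∈ G.strat u, costFn S u ≤ ρ * costFn (Function.update S u s') u

/-- `sstar u` is a best response of player `u` to `S₋ᵤ` w.r.t. the costs `costFn`. -/
def IsBestResponses (G : WCGame N E d W A) (costFn : Profile N E → Fin N → ℝ)
    (S : Profile N E) (sstar : Fin N → Finset (Fin E)) : Prop :=
  ∀ u, sstar u ∈ G.strat u ∧
    ∀ s ∈ G.strat u, costFn (Function.update S u (sstar u)) u ≤ costFn (Function.update S u s) u

/-- One step of Algorithm 1 (the `1/(1-ε)` best response dynamic on the `Ψ̂`-game),
moving from profile `S` to profile `S'` by letting the chosen player `ut` (a player with a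
`1/(1-ε)`-move of maximum cost reduction) switch to her best response `sstar ut`. -/
def AlgOneStep (G : WCGame N E d W A) (ε : ℝ) (S S' : Profile N E) (ut : Fin N)
    (sstar : Fin N → Finset (Fin E)) : Prop :=
  G.IsBestResponses G.hcost S sstar ∧
  G.hcost S ut > (1 / (1 - ε)) * G.hcost (Function.update S ut (sstar ut)) ut ∧
  (∀ u, G.hcost S u > (1 / (1 - ε)) * G.hcost (Function.update S u (sstar u)) u →
    G.hcost S ut - G.hcost (Function.update S ut (sstar ut)) ut ≥
      G.hcost S u - G.hcost (Function.update S u (sstar u)) u) ∧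
  S' = Function.update S ut (sstar ut)

/-- One step of Algorithm 2 (the refined `ρ/(1-ε)` best response dynamic on `Γ`),
moving from profile `S` to profile `S'` by letting the chosen player `ut` (a player
maximizing `c_u(S) - ρ·c_u(s_u^*, S₋ᵤ)` among players with `ρ/(1-ε)`-moves) switch to
her best response `sstar ut`. -/
def AlgTwoStep (G : WCGame N E d W A) (ρ ε : ℝ) (S S' : Profile N E) (ut : Fin N)
    (sstar : Fin N → Finset (Fin E)) : Prop :=
  G.IsBestResponses G.cost S sstar ∧
  G.cost S ut > (ρ / (1 - ε)) * G.cost (Function.update S ut (sstar ut)) ut ∧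
  (∀ u, G.cost S u > (ρ / (1 - ε)) * G.cost (Function.update S u (sstar u)) u →
    G.cost S ut - ρ * G.cost (Function.update S ut (sstar ut)) ut ≥
      G.cost S u - ρ * G.cost (Function.update S u (sstar u)) u) ∧
  S' = Function.update S ut (sstar ut)

/-- `c_max`: the maximum cost of a player over all (feasible) profiles in `Γ`. -/
noncomputable def cMax (G : WCGame N E d W A) : ℝ :=
  sSup {x | ∃ S u, G.IsProfile S ∧ x = G.cost S u}

/-- `ĉ_max`: the maximum cost of a player over all (feasible) profiles in `Γ̂`. -/
noncomputable def hcMax (G : WCGame N E d W A) : ℝ :=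
  sSup {x | ∃ S u, G.IsProfile S ∧ x = G.hcost S u}

/-- `Φ̂_min`: the minimum of the potential `Φ̂` over all (feasible) profiles. -/
noncomputable def potHatMin (G : WCGame N E d W A) : ℝ :=
  sInf {x | ∃ S, G.IsProfile S ∧ x = G.potHat S}

/-- `a_min⁺`: the minimum positive coefficient of the latency functions. -/
noncomputable def aMinPos (G : WCGame N E d W A) : ℝ :=
  sInf {x | 0 < x ∧ ∃ e k, k ≤ d ∧ x = G.a e k}

end WCGame

/-!
Two facts about the `Ψ̂`-game drive the bound. First, `Φ̂` is an exact potential: since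
`Ψ̂_{k+1}(a ::ₘ M) - Ψ̂_{k+1}(M) = (k+1)·a·Ψ̂_k(a ::ₘ M)`, a unilateral move changes `Φ̂` by exactly
the mover's change of cost, and `Φ̂(S) ≤ ∑ᵤ ĉᵤ(S)`. Second, in a symmetric game every player `u`
may copy the best response of `u_t`, and this costs `u` at most `W + d!·W^{d+1}` times what it
costs `u_t`: on each resource the two loads differ by one weight in `[1, W]` traded for another,
and `Ψ̂_k(a ::ₘ b ::ₘ M) ≤ (1 + k·W^k)·Ψ̂_k(b ::ₘ M)` for `a ≤ W`, `1 ≤ b`.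
So a player without a `1/(1-ε)`-move costs at most `(W + d!·W^{d+1})·ĉ_{u_t}(S)`, while `u_t`
gains more than `ε·ĉ_{u_t}(S)`; a player with such a move could gain more than `ε` times her
cost, and `u_t` gains at least as much. Averaging over the `N` players bounds the drop of `Φ̂`.
-/

open Finset Function
open scoped Nat

theorem hpoly_zero (l : List ℝ) : hpoly 0 l = 1 := by
  rw [hpoly]

theorem hpoly_succ_nil (k : ℕ) : hpoly (k + 1) [] = 0 := by
  rw [hpoly]

theorem hpoly_succ_cons (k : ℕ) (a : ℝ) (l : List ℝ) :
    hpoly (k + 1) (a :: l) = a * hpoly k (a :: l) + hpoly (k + 1) l := by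
  rw [hpoly]

theorem hpoly_swap (a b : ℝ) (l : List ℝ) : ∀ k, hpoly k (a :: b :: l) = hpoly k (b :: a :: l)
  | 0 => by rw [hpoly_zero, hpoly_zero]
  | 1 => by simp only [hpoly_succ_cons, hpoly_zero]; ring
  | k + 2 => by
    show hpoly (k + 1 + 1) _ = hpoly (k + 1 + 1) _
    have expand_ab := hpoly_succ_cons k a (b :: l)
    have expand_ba : hpoly (k + 1) (a :: b :: l) =
        b * hpoly k (a :: b :: l) + hpoly (k + 1) (a :: l) := by
      rw [hpoly_swap a b l (k + 1), hpoly_succ_cons, hpoly_swap a b l k]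
    rw [hpoly_succ_cons (k + 1) a (b :: l), hpoly_succ_cons (k + 1) b (a :: l),
      hpoly_succ_cons (k + 1) b l, hpoly_succ_cons (k + 1) a l, ← hpoly_swap a b l (k + 1)]
    linear_combination a * expand_ba - b * expand_ab

theorem List.Perm.hpoly_eq {l l' : List ℝ} (h : l.Perm l') (k : ℕ) : hpoly k l = hpoly k l' := by
  induction h generalizing k with
  | nil => rfl
  | cons a _ ih =>
    induction k with
    | zero => rw [hpoly_zero, hpoly_zero]
    | succ k ihk => rw [hpoly_succ_cons, hpoly_succ_cons, ihk, ih]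
  | swap a b l => exact hpoly_swap b a l k
  | trans _ _ ih₁ ih₂ => rw [ih₁, ih₂]

theorem psiHat_coe (k : ℕ) (l : List ℝ) : psiHat k l = k ! * hpoly k l :=
  congrArg _ ((Multiset.coe_eq_coe.mp (Multiset.coe_toList (l : Multiset ℝ))).hpoly_eq k)

theorem psiHat_zero_left (M : Multiset ℝ) : psiHat 0 M = 1 := by
  simp [psiHat, hpoly_zero]

theorem psiHat_succ_zero (k : ℕ) : psiHat (k + 1) 0 = 0 := by
  simp [psiHat, hpoly_succ_nil]

theorem psiHat_succ_cons (k : ℕ) (a : ℝ) (M : Multiset ℝ) :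
    psiHat (k + 1) (a ::ₘ M) = (k + 1) * a * psiHat k (a ::ₘ M) + psiHat (k + 1) M := by
  obtain ⟨l, rfl⟩ : ∃ l : List ℝ, (l : Multiset ℝ) = M := ⟨M.toList, M.coe_toList⟩
  rw [Multiset.cons_coe, psiHat_coe, psiHat_coe, psiHat_coe, hpoly_succ_cons, Nat.factorial_succ]
  push_cast
  ring

section psiHat

variable {a b W : ℝ} {M L₁ L₂ : Multiset ℝ}

theorem psiHat_nonneg (hM : ∀ x ∈ M, 0 ≤ x) (k : ℕ) : 0 ≤ psiHat k M := by
  induction M using Multiset.induction_on generalizing k with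
  | empty =>
    cases k
    · rw [psiHat_zero_left]; exact zero_le_one
    · rw [psiHat_succ_zero]
  | cons a M ih =>
    have ha := hM a (Multiset.mem_cons_self a M)
    have ih := ih fun x hx => hM x (Multiset.mem_cons_of_mem hx)
    induction k with
    | zero => rw [psiHat_zero_left]; exact zero_le_one
    | succ k ihk => rw [psiHat_succ_cons]; have := ih (k + 1); positivity

theorem psiHat_le_psiHat_cons (ha : 0 ≤ a) (hM : ∀ x ∈ M, 0 ≤ x) (k : ℕ) :
    psiHat k M ≤ psiHat k (a ::ₘ M) := by
  cases k with
  | zero => rw [psiHat_zero_left, psiHat_zero_left]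
  | succ k =>
    have := psiHat_nonneg (Multiset.forall_mem_cons.mpr ⟨ha, hM⟩) k
    rw [psiHat_succ_cons]
    exact le_add_of_nonneg_left (by positivity)

theorem psiHat_mono (h : L₁ ≤ L₂) (hL₂ : ∀ x ∈ L₂, 0 ≤ x) (k : ℕ) :
    psiHat k L₁ ≤ psiHat k L₂ := by
  obtain ⟨C, rfl⟩ := Multiset.le_iff_exists_add.mp h
  clear h
  induction C using Multiset.induction_on with
  | empty => rw [add_zero]
  | cons c C ih =>
    rw [Multiset.add_cons, Multiset.forall_mem_cons] at hL₂
    rw [Multiset.add_cons]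
    exact (ih hL₂.2).trans (psiHat_le_psiHat_cons hL₂.1 hL₂.2 k)

theorem psiHat_succ_le_sum_mul (hM : ∀ x ∈ M, 0 ≤ x) (k : ℕ) :
    psiHat (k + 1) M ≤ (k + 1) * M.sum * psiHat k M := by
  induction M using Multiset.induction_on with
  | empty => simp [psiHat_succ_zero]
  | cons a M ih =>
    rw [Multiset.forall_mem_cons] at hM
    have ih := ih hM.2
    have hsum := Multiset.sum_nonneg hM.2
    have hmono := psiHat_le_psiHat_cons hM.1 hM.2 k
    have : (k + 1) * M.sum * psiHat k M ≤ (k + 1) * M.sum * psiHat k (a ::ₘ M) :=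
      mul_le_mul_of_nonneg_left hmono (by positivity)
    rw [psiHat_succ_cons, Multiset.sum_cons]
    linarith

theorem mul_psiHat_cons_le_psiHat_succ_cons (hb : 1 ≤ b) (hM : ∀ x ∈ M, 0 ≤ x) (k : ℕ) :
    (k + 1) * psiHat k (b ::ₘ M) ≤ psiHat (k + 1) (b ::ₘ M) := by
  have hψ := psiHat_nonneg (Multiset.forall_mem_cons.mpr ⟨zero_le_one.trans hb, hM⟩) k
  have := psiHat_nonneg hM (k + 1)
  have : (k + 1) * psiHat k (b ::ₘ M) ≤ (k + 1) * b * psiHat k (b ::ₘ M) := by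
    rw [mul_right_comm]
    exact le_mul_of_one_le_right (by positivity) hb
  rw [psiHat_succ_cons]
  linarith

theorem psiHat_cons_cons_le (hW : 1 ≤ W) (ha : 0 ≤ a) (haW : a ≤ W) (hb : 1 ≤ b)
    (hM : ∀ x ∈ M, 0 ≤ x) (k : ℕ) :
    psiHat k (a ::ₘ b ::ₘ M) ≤ (1 + k * W ^ k) * psiHat k (b ::ₘ M) := by
  induction k with
  | zero => simp [psiHat_zero_left]
  | succ k ih =>
    have hbM : ∀ x ∈ b ::ₘ M, 0 ≤ x := Multiset.forall_mem_cons.mpr ⟨zero_le_one.trans hb, hM⟩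
    have habM := psiHat_nonneg (Multiset.forall_mem_cons.mpr ⟨ha, hbM⟩) k
    have hdeg := mul_psiHat_cons_le_psiHat_succ_cons hb hM k
    have hnonneg := psiHat_nonneg hbM (k + 1)
    have hpow : W ≤ W ^ (k + 1) := le_self_pow₀ hW k.succ_ne_zero
    rw [psiHat_succ_cons]
    calc (k + 1) * a * psiHat k (a ::ₘ b ::ₘ M) + psiHat (k + 1) (b ::ₘ M)
        ≤ (k + 1) * W * ((1 + k * W ^ k) * psiHat k (b ::ₘ M)) + psiHat (k + 1) (b ::ₘ M) := by
          gcongr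
      _ = W * (1 + k * W ^ k) * ((k + 1) * psiHat k (b ::ₘ M)) + psiHat (k + 1) (b ::ₘ M) := by
          ring
      _ ≤ W * (1 + k * W ^ k) * psiHat (k + 1) (b ::ₘ M) + psiHat (k + 1) (b ::ₘ M) := by
          have : 0 ≤ W := by linarith
          gcongr
      _ = (1 + W + k * W ^ (k + 1)) * psiHat (k + 1) (b ::ₘ M) := by ring
      _ ≤ (1 + ↑(k + 1) * W ^ (k + 1)) * psiHat (k + 1) (b ::ₘ M) := by
          refine mul_le_mul_of_nonneg_right ?_ hnonneg
          push_cast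
          linarith

end psiHat

namespace WCGame

variable {N E d : ℕ} {W A : ℝ} (G : WCGame N E d W A)

noncomputable def latency (e : Fin E) (M : Multiset ℝ) : ℝ :=
  ∑ k ∈ range (d + 1), G.a e k * psiHat k M

noncomputable def resourcePot (e : Fin E) (M : Multiset ℝ) : ℝ :=
  ∑ k ∈ range (d + 1), G.a e k / ((k : ℝ) + 1) * psiHat (k + 1) M

theorem hcost_eq_sum_latency (S : Profile N E) (u : Fin N) :
    G.hcost S u = G.w u * ∑ e ∈ S u, G.latency e (G.load S e) := rfl

theorem potHat_eq_sum_resourcePot (S : Profile N E) :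
    G.potHat S = ∑ e, G.resourcePot e (G.load S e) := rfl

theorem latency_nonneg (e : Fin E) {M : Multiset ℝ} (hM : ∀ x ∈ M, 0 ≤ x) :
    0 ≤ G.latency e M :=
  sum_nonneg fun k _ => mul_nonneg (G.ha_nonneg e k) (psiHat_nonneg hM k)

theorem resourcePot_cons_sub (e : Fin E) (a : ℝ) (M : Multiset ℝ) :
    G.resourcePot e (a ::ₘ M) - G.resourcePot e M = a * G.latency e (a ::ₘ M) := by
  simp only [resourcePot, latency, ← sum_sub_distrib, mul_sum]
  refine sum_congr rfl fun k _ => ?_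
  rw [psiHat_succ_cons]
  field_simp
  ring

theorem resourcePot_le_sum_mul_latency (e : Fin E) {M : Multiset ℝ} (hM : ∀ x ∈ M, 0 ≤ x) :
    G.resourcePot e M ≤ M.sum * G.latency e M := by
  rw [resourcePot, latency, mul_sum]
  refine sum_le_sum fun k _ => ?_
  calc G.a e k / ((k : ℝ) + 1) * psiHat (k + 1) M
      ≤ G.a e k / ((k : ℝ) + 1) * ((k + 1) * M.sum * psiHat k M) :=
        mul_le_mul_of_nonneg_left (psiHat_succ_le_sum_mul hM k)
          (div_nonneg (G.ha_nonneg e k) (by positivity))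
    _ = M.sum * (G.a e k * psiHat k M) := by
        field_simp

theorem latency_cons_le {a b : ℝ} {L₁ L₂ M : Multiset ℝ} (e : Fin E) (ha : 0 ≤ a) (haW : a ≤ W)
    (hb : 1 ≤ b) (h₁ : L₁ ≤ b ::ₘ M) (h₂ : M ≤ L₂) (hL₂ : ∀ x ∈ L₂, 0 ≤ x) :
    G.latency e (a ::ₘ L₁) ≤ (1 + d ! * W ^ d) * G.latency e (b ::ₘ L₂) := by
  have hM : ∀ x ∈ M, 0 ≤ x := fun x hx => hL₂ x (Multiset.mem_of_le h₂ hx)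
  have hbM : ∀ x ∈ b ::ₘ M, 0 ≤ x := Multiset.forall_mem_cons.mpr ⟨zero_le_one.trans hb, hM⟩
  have hbL₂ : ∀ x ∈ b ::ₘ L₂, 0 ≤ x := Multiset.forall_mem_cons.mpr ⟨zero_le_one.trans hb, hL₂⟩
  rw [latency, latency, mul_sum]
  refine sum_le_sum fun k hk => ?_
  have hkd : k ≤ d := Nat.lt_succ_iff.mp (mem_range.mp hk)
  have hW := G.hW
  have hcoeff : (k : ℝ) * W ^ k ≤ d ! * W ^ d := by
    gcongr
    exact_mod_cast hkd.trans d.self_le_factorial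
  have hψ := psiHat_nonneg hbM k
  calc G.a e k * psiHat k (a ::ₘ L₁)
      ≤ G.a e k * ((1 + k * W ^ k) * psiHat k (b ::ₘ M)) := by
        refine mul_le_mul_of_nonneg_left ?_ (G.ha_nonneg e k)
        exact (psiHat_mono (Multiset.cons_le_cons a h₁)
          (Multiset.forall_mem_cons.mpr ⟨ha, hbM⟩) k).trans
          (psiHat_cons_cons_le hW ha haW hb hM k)
    _ ≤ G.a e k * ((1 + d ! * W ^ d) * psiHat k (b ::ₘ L₂)) := by
        refine mul_le_mul_of_nonneg_left ?_ (G.ha_nonneg e k)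
        gcongr
        exact psiHat_mono (Multiset.cons_le_cons b h₂) hbL₂ k
    _ = (1 + d ! * W ^ d) * (G.a e k * psiHat k (b ::ₘ L₂)) := by ring

theorem load_nonneg (S : Profile N E) (e : Fin E) : ∀ x ∈ G.load S e, 0 ≤ x := by
  simp only [load, Multiset.mem_map]
  rintro _ ⟨u, -, rfl⟩
  linarith [G.hw_lower u]

theorem load_mono {S S' : Profile N E} (h : ∀ u, S u ⊆ S' u) (e : Fin E) :
    G.load S e ≤ G.load S' e :=
  Multiset.map_le_map (val_le_iff.mpr (monotone_filter_right _ fun u _ he => h u he))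

theorem load_update (S : Profile N E) (u : Fin N) (s : Finset (Fin E)) (e : Fin E) :
    G.load (update S u s) e =
      if e ∈ s then G.w u ::ₘ G.load (update S u ∅) e else G.load (update S u ∅) e := by
  split_ifs with he
  · have : univ.filter (fun v => e ∈ update S u s v) =
        insert u (univ.filter (fun v => e ∈ update S u ∅ v)) := by
      ext v
      by_cases hv : v = u
      · subst hv; simp [he]
      · simp [hv]
    rw [load, load, this, insert_val_of_notMem (by simp), Multiset.map_cons]
  · unfold load
    congr 3
    ext v
    by_cases hv : v = u
    · subst hv; simp [he]
    · simp [hv]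

theorem load_le_cons_load_update_empty (S : Profile N E) (u : Fin N) (e : Fin E) :
    G.load S e ≤ G.w u ::ₘ G.load (update S u ∅) e := by
  have h := G.load_update S u (S u) e
  rw [update_eq_self] at h
  rw [h]
  split_ifs
  exacts [le_rfl, Multiset.le_cons_self _ _]

theorem load_update_empty_le (S : Profile N E) (u : Fin N) (e : Fin E) :
    G.load (update S u ∅) e ≤ G.load S e :=
  G.load_mono (fun v => by by_cases hv : v = u <;> simp [hv]) e

theorem hcost_nonneg (S : Profile N E) (u : Fin N) : 0 ≤ G.hcost S u :=
  mul_nonneg (zero_le_one.trans (G.hw_lower u))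
    (sum_nonneg fun e _ => G.latency_nonneg e (G.load_nonneg S e))

theorem hcost_update_le_of_ne (S : Profile N E) {u v : Fin N} (huv : u ≠ v)
    (σ : Finset (Fin E)) :
    G.hcost (update S u σ) u ≤ (W + d ! * W ^ (d + 1)) * G.hcost (update S v σ) v := by
  have hW := G.hW
  have per_resource : ∀ e ∈ σ, G.latency e (G.load (update S u σ) e) ≤
      (1 + d ! * W ^ d) * G.latency e (G.load (update S v σ) e) := by
    intro e he
    rw [G.load_update S u σ e, G.load_update S v σ e, if_pos he, if_pos he]
    refine G.latency_cons_le e (zero_le_one.trans (G.hw_lower u)) (G.hw_upper u) (G.hw_lower v)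
      (G.load_le_cons_load_update_empty _ v e) ?_ (G.load_nonneg _ e)
    rw [update_comm huv]
    exact G.load_update_empty_le _ u e
  have hσv : 0 ≤ ∑ e ∈ σ, G.latency e (G.load (update S v σ) e) :=
    sum_nonneg fun e _ => G.latency_nonneg e (G.load_nonneg _ e)
  simp only [hcost_eq_sum_latency, update_self]
  calc G.w u * ∑ e ∈ σ, G.latency e (G.load (update S u σ) e)
      ≤ W * ∑ e ∈ σ, (1 + d ! * W ^ d) * G.latency e (G.load (update S v σ) e) :=
        mul_le_mul (G.hw_upper u) (sum_le_sum per_resource)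
          (sum_nonneg fun e _ => G.latency_nonneg e (G.load_nonneg _ e)) (by linarith)
    _ = (W + d ! * W ^ (d + 1)) * (1 * ∑ e ∈ σ, G.latency e (G.load (update S v σ) e)) := by
        rw [← mul_sum]; ring
    _ ≤ (W + d ! * W ^ (d + 1)) * (G.w v * ∑ e ∈ σ, G.latency e (G.load (update S v σ) e)) := by
        have : 0 ≤ W ^ (d + 1) := by positivity
        gcongr
        exact G.hw_lower v

theorem potHat_update_sub_potHat_update_empty (S : Profile N E) (u : Fin N)
    (s : Finset (Fin E)) :
    G.potHat (update S u s) - G.potHat (update S u ∅) = G.hcost (update S u s) u := by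
  have per_resource : ∀ e, G.resourcePot e (G.load (update S u s) e) -
      G.resourcePot e (G.load (update S u ∅) e) =
        if e ∈ s then G.w u * G.latency e (G.load (update S u s) e) else 0 := by
    intro e
    rw [G.load_update S u s e]
    split_ifs
    exacts [G.resourcePot_cons_sub e _ _, sub_self _]
  rw [potHat_eq_sum_resourcePot, potHat_eq_sum_resourcePot, ← sum_sub_distrib,
    sum_congr rfl fun e _ => per_resource e, sum_ite_mem, univ_inter, hcost_eq_sum_latency,
    update_self,
    mul_sum]

theorem potHat_sub_potHat_update (S : Profile N E) (u : Fin N) (s : Finset (Fin E)) :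
    G.potHat S - G.potHat (update S u s) = G.hcost S u - G.hcost (update S u s) u := by
  have h := G.potHat_update_sub_potHat_update_empty S u (S u)
  rw [update_eq_self] at h
  linarith [G.potHat_update_sub_potHat_update_empty S u s]

theorem sum_hcost_eq (S : Profile N E) :
    ∑ u, G.hcost S u = ∑ e, (G.load S e).sum * G.latency e (G.load S e) := by
  simp only [hcost_eq_sum_latency, mul_sum]
  rw [sum_comm' (t' := univ) (s' := fun e => univ.filter (e ∈ S ·)) (by simp)]
  refine sum_congr rfl fun e _ => ?_
  rw [← sum_mul]
  rfl

theorem potHat_le_sum_hcost (S : Profile N E) : G.potHat S ≤ ∑ u, G.hcost S u := by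
  rw [sum_hcost_eq]
  exact sum_le_sum fun e _ => G.resourcePot_le_sum_mul_latency e (G.load_nonneg S e)

theorem hcost_gain_of_algOneStep (hsym : ∀ u u' : Fin N, G.strat u = G.strat u') {ε : ℝ}
    (hε0 : 0 < ε) (hε1 : ε < 1) {S S' : Profile N E} {ut : Fin N}
    {sstar : Fin N → Finset (Fin E)} (hstep : G.AlgOneStep ε S S' ut sstar) (u : Fin N) :
    ε / (W + d ! * W ^ (d + 1)) * G.hcost S u ≤ G.hcost S ut - G.hcost S' ut := by
  obtain ⟨hbest, hut, hmax, rfl⟩ := hstep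
  have h1ε : 0 < 1 - ε := sub_pos.mpr hε1
  simp only [gt_iff_lt, one_div, inv_mul_lt_iff₀ h1ε] at hut hmax
  set C := W + d ! * W ^ (d + 1)
  set Δ := G.hcost S ut - G.hcost (update S ut (sstar ut)) ut
  have hC : 1 ≤ C := by
    have hW := G.hW
    have : 0 ≤ (d ! : ℝ) * W ^ (d + 1) := by positivity
    linarith
  have hgain : ε * G.hcost S ut < Δ := by linarith
  have hΔ : 0 ≤ Δ := by nlinarith [G.hcost_nonneg S ut]
  rw [div_mul_eq_mul_div, div_le_iff₀ (by linarith)]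
  by_cases hu : G.hcost (update S u (sstar u)) u < (1 - ε) * G.hcost S u
  · have := hmax u hu
    nlinarith [G.hcost_nonneg (update S u (sstar u)) u]
  · have hne : u ≠ ut := by
      rintro rfl
      exact hu hut
    have hdev : (1 - ε) * G.hcost S u ≤ C * G.hcost (update S ut (sstar ut)) ut :=
      calc (1 - ε) * G.hcost S u ≤ G.hcost (update S u (sstar u)) u := not_lt.mp hu
        _ ≤ G.hcost (update S u (sstar ut)) u := (hbest u).2 _ (hsym u ut ▸ (hbest ut).1)
        _ ≤ _ := G.hcost_update_le_of_ne S hne _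
    have hcomp : G.hcost S u ≤ C * G.hcost S ut :=
      le_of_mul_le_mul_left (by nlinarith) h1ε
    nlinarith

end WCGame

open WCGame in
theorem algOne_step_decrement_symmetric_general {N E d : ℕ} {W A : ℝ}
    (G : WCGame N E d W A) (hsym : ∀ u u' : Fin N, G.strat u = G.strat u')
    (ε : ℝ) (hε0 : 0 < ε) (hε1 : ε < 1)
    (S S' : Profile N E)
    (ut : Fin N) (sstar : Fin N → Finset (Fin E))
    (hstep : G.AlgOneStep ε S S' ut sstar) :
    (∀ u : Fin N, G.hcost S ut - G.hcost S' ut ≥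
      ε / (W + (Nat.factorial d : ℝ) * W ^ (d + 1)) * G.hcost S u) ∧
    G.potHat S - G.potHat S' ≥
      ε / ((N : ℝ) * (W + (Nat.factorial d : ℝ) * W ^ (d + 1))) * G.potHat S := by
  have hgain := G.hcost_gain_of_algOneStep hsym hε0 hε1 hstep
  refine ⟨hgain, ?_⟩
  obtain ⟨-, -, -, rfl⟩ := hstep
  have hN : (0 : ℝ) < N := Nat.cast_pos.mpr ut.pos
  have hC : 0 < W + d ! * W ^ (d + 1) := by
    have hW := G.hW
    have : 0 ≤ (d ! : ℝ) * W ^ (d + 1) := by positivity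
    linarith
  rw [ge_iff_le, G.potHat_sub_potHat_update]
  set Δ := G.hcost S ut - G.hcost (update S ut (sstar ut)) ut
  calc ε / (N * (W + d ! * W ^ (d + 1))) * G.potHat S
      ≤ ε / (N * (W + d ! * W ^ (d + 1))) * ∑ u, G.hcost S u :=
        mul_le_mul_of_nonneg_left (G.potHat_le_sum_hcost S) (by positivity)
    _ = (∑ u, ε / (W + d ! * W ^ (d + 1)) * G.hcost S u) / N := by
        rw [← mul_sum]
        field_simp
    _ ≤ (∑ _u : Fin N, Δ) / N := by gcongr with u; exact hgain u
    _ = Δ := by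
        rw [sum_const, card_fin, nsmul_eq_mul]
        field_simp

open WCGame in
/-- Lemma 7: in the symmetric case (`Σ_u = Σ_{u'}` for all players), if `S` is not a
`1/(1−ε)`-approximate pure Nash equilibrium of `Γ̂` and `S'` is obtained from `S` by an
Algorithm 1 step with chosen player `ut`, then for every player `u`,
`ĉ_{ut}(S) − ĉ_{ut}(S') ≥ (ε/(W + d!·W^{d+1}))·ĉ_u(S)`; consequently
`Φ̂(S) − Φ̂(S') ≥ (ε/(N·(W + d!·W^{d+1})))·Φ̂(S)`. -/
theorem algOne_step_decrement_symmetric {N E d : ℕ} {W A : ℝ}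
    (G : WCGame N E d W A) (hsym : ∀ u u' : Fin N, G.strat u = G.strat u')
    (ε : ℝ) (hε0 : 0 < ε) (hε1 : ε < 1)
    (S S' : Profile N E) (hS : G.IsProfile S)
    (hnot : ¬ G.IsApproxPNE G.hcost (1 / (1 - ε)) S)
    (ut : Fin N) (sstar : Fin N → Finset (Fin E))
    (hstep : G.AlgOneStep ε S S' ut sstar) :
    (∀ u : Fin N, G.hcost S ut - G.hcost S' ut ≥
      ε / (W + (Nat.factorial d : ℝ) * W ^ (d + 1)) * G.hcost S u) ∧
    G.potHat S - G.potHat S' ≥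
      ε / ((N : ℝ) * (W + (Nat.factorial d : ℝ) * W ^ (d + 1))) * G.potHat S :=
  algOne_step_decrement_symmetric_general G hsym ε hε0 hε1 S S' ut sstar hstep
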